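/- arXiv:2302.13216 — 3 statements merged into one kernel-verified Lean document; each statement's English description precedes it below -/
import Mathlib

section
/- Let (A, d_A) be a differential algebra of weight λ and let (M, d_M) be a differential bimodule over (A, d_A). Define new actions a ⊢ x = (a + λ d_A(a))·x and x ⊣ a = x·(a + λ d_A(a)) for a ∈ A, x ∈ M. Then (M, ⊢, ⊣) is an A-bimodule, i.e. (ab) ⊢ x = a ⊢ (b ⊢ x), x ⊣ (ab) = (x ⊣ a) ⊣ b and (a ⊢ x) ⊣ b = a ⊢ (x ⊣ b) for all a, b ∈ A, x ∈ M; moreover (M, ⊢, ⊣, d_M) is again a differential bimodule over (A, d_A), i.e. d_M(a ⊢ x) = d_A(a) ⊢ x + a ⊢ d_M(x) + λ (d_A(a) ⊢ d_M(x)) and d_M(x ⊣ a) = x ⊣ d_A(a) + d_M(x) ⊣ a + λ (d_M(x) ⊣ d_A(a)) for all a ∈ A, x ∈ M. -/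
/-- If `(M, dM)` is a differential bimodule over a differential algebra
`(A, d)` of weight `λ`, then the new actions `a ⊢ x = (a + λ d a)·x`, `x ⊣ a = x·(a + λ d a)`
make `M` again an `A`-bimodule, and `(M, ⊢, ⊣, dM)` is again a differential bimodule. -/
theorem stmt1 (k : Type*) [Field k] [CharZero k] (lam : k)
    (A : Type*) [NonUnitalRing A] [Module k A]
    [SMulCommClass k A A] [IsScalarTower k A A]
    (M : Type*) [AddCommGroup M] [Module k M]
    (l : A →ₗ[k] M →ₗ[k] M) (r : M →ₗ[k] A →ₗ[k] M)
    (hl : ∀ (a b : A) (x : M), l (a * b) x = l a (l b x))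
    (hr : ∀ (a b : A) (x : M), r (r x a) b = r x (a * b))
    (hlr : ∀ (a b : A) (x : M), r (l a x) b = l a (r x b))
    (d : A →ₗ[k] A)
    (hd : ∀ u v : A, d (u * v) = d u * v + u * d v + lam • (d u * d v))
    (dM : M →ₗ[k] M)
    (hdl : ∀ (a : A) (x : M), dM (l a x) = l (d a) x + l a (dM x) + lam • l (d a) (dM x))
    (hdr : ∀ (a : A) (x : M), dM (r x a) = r x (d a) + r (dM x) a + lam • r (dM x) (d a)) :
    (∀ (a b : A) (x : M),
        l (a * b + lam • d (a * b)) x = l (a + lam • d a) (l (b + lam • d b) x))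
    ∧ (∀ (a b : A) (x : M),
        r (r x (a + lam • d a)) (b + lam • d b) = r x (a * b + lam • d (a * b)))
    ∧ (∀ (a b : A) (x : M),
        r (l (a + lam • d a) x) (b + lam • d b) = l (a + lam • d a) (r x (b + lam • d b)))
    ∧ (∀ (a : A) (x : M),
        dM (l (a + lam • d a) x) =
          l (d a + lam • d (d a)) x + l (a + lam • d a) (dM x)
            + lam • l (d a + lam • d (d a)) (dM x))
    ∧ (∀ (a : A) (x : M),
        dM (r x (a + lam • d a)) =
          r x (d a + lam • d (d a)) + r (dM x) (a + lam • d a)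
            + lam • r (dM x) (d a + lam • d (d a))) := by
  have hφ : ∀ a b : A, a * b + lam • d (a * b) = (a + lam • d a) * (b + lam • d b) := by
    intro a b
    rw [hd]
    rw [add_mul, mul_add, mul_add, smul_add, smul_add]
    rw [smul_mul_assoc, mul_smul_comm, smul_mul_assoc, mul_smul_comm, smul_smul]
    abel
  have hdφ : ∀ a : A, d (a + lam • d a) = d a + lam • d (d a) := by
    intro a; rw [map_add, map_smul]
  refine ⟨?_, ?_, ?_, ?_, ?_⟩
  · intro a b x; rw [hφ, hl]
  · intro a b x; rw [hφ, hr]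
  · intro a b x; exact hlr _ _ _
  · intro a x; rw [hdl, hdφ]
  · intro a x; rw [hdr, hdφ]
end

section
/- Let (A, d_A) be a differential algebra of weight λ and let (M, d_M) be a differential bimodule over (A, d_A). Then the operators ∂^n_DO satisfy ∂^{n+1}_DO ∘ ∂^n_DO = 0 for every n ≥ 0, so (C^•_DO(A, M), ∂^•_DO) is a cochain complex (the cochain complex of the differential operator d_A with coefficients in M). -/
/-- The coboundary operator `∂ⁿ_DO` of the differential operator `d` (of weight `λ`)
with coefficients in a differential bimodule `M` (left/right `A`-actions `l`, `r`):
`∂ⁿ(g)(a₁ ⊗ ⋯ ⊗ a_{n+1}) = (−1)^{n+1}(a₁ + λ d a₁)·g(a₂ ⊗ ⋯)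
+ Σᵢ (−1)^{n+1−i} g(⋯ ⊗ aᵢa_{i+1} ⊗ ⋯) + g(a₁ ⊗ ⋯ ⊗ aₙ)·(a_{n+1} + λ d a_{n+1})`. -/
def hochDOCob (k : Type*) [Field k] (lam : k) (A M : Type*) [NonUnitalRing A] [Module k A]
    [AddCommGroup M] [Module k M]
    (l : A →ₗ[k] M →ₗ[k] M) (r : M →ₗ[k] A →ₗ[k] M) (d : A →ₗ[k] A)
    {n : ℕ} (F : (Fin n → A) → M) : (Fin (n + 1) → A) → M :=
  fun a =>
    ((-1 : ℤ) ^ (n + 1)) • l (a 0 + lam • d (a 0)) (F (Fin.tail a))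
      + (∑ i : Fin n, ((-1 : ℤ) ^ (n - (i : ℕ))) •
          F (fun j => if (j : ℕ) < (i : ℕ) then a j.castSucc
             else if (j : ℕ) = (i : ℕ) then a j.castSucc * a j.succ
             else a j.succ))
      + r (F (Fin.init a)) (a (Fin.last n) + lam • d (a (Fin.last n)))

section HochAux

variable {A M : Type*} [NonUnitalRing A] [AddCommGroup M]

def hmerge (m p : ℕ) (a : Fin (m+1) → A) : Fin m → A :=
  fun j => if (j : ℕ) < p then a j.castSucc
    else if (j : ℕ) = p then a j.castSucc * a j.succ
    else a j.succ

def hface (L R : A → M →+ M) (m j : ℕ) (F : (Fin m → A) → M) :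
    (Fin (m+1) → A) → M := fun a =>
  if j = 0 then L (a 0) (F (Fin.tail a))
  else if j ≤ m then F (hmerge m (j - 1) a)
  else R (a (Fin.last m)) (F (Fin.init a))

lemma hmerge_hmerge (m p q : ℕ) (hpq : p ≤ q) (a : Fin (m+2) → A) :
    hmerge m q (hmerge (m+1) p a) = hmerge m p (hmerge (m+1) (q+1) a) := by
  funext t
  simp only [hmerge, Fin.coe_castSucc, Fin.val_succ]
  split_ifs <;>
    first
      | rfl
      | omega
      | (congr 1 <;> first
            | exact congrArg a (Fin.ext (by simp))
            | (congr 1 <;> exact congrArg a (Fin.ext (by simp))))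
      | (rw [mul_assoc]; congr 1 <;> first
            | exact congrArg a (Fin.ext (by simp))
            | (congr 1 <;> exact congrArg a (Fin.ext (by simp))))

lemma cosimp (L R : A → M →+ M)
    (hL : ∀ (a b : A) (x : M), L (a * b) x = L a (L b x))
    (hR : ∀ (a b : A) (x : M), R b (R a x) = R (a * b) x)
    (hLR : ∀ (a b : A) (x : M), R b (L a x) = L a (R b x))
    (m i j : ℕ) (hij : i ≤ j) (hj : j ≤ m + 1)
    (F : (Fin m → A) → M) (a : Fin (m+2) → A) :
    hface L R (m+1) i (hface L R m j F) a
      = hface L R (m+1) (j+1) (hface L R m i F) a := by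
  rcases Nat.eq_zero_or_pos i with hi0 | hipos
  · subst hi0
    rcases Nat.eq_zero_or_pos j with hj0 | hjpos
    · -- case i = 0, j = 0
      subst hj0
      have e0 : hmerge (m+1) 0 a 0 = a 0 * a 1 := by
        simp [hmerge]
      have e1 : Fin.tail (hmerge (m+1) 0 a) = Fin.tail (Fin.tail a) := by
        funext t
        simp [Fin.tail, hmerge]
      have e2 : Fin.tail a 0 = a 1 := by
        simp [Fin.tail]
      simp only [hface, if_pos rfl, if_neg (by omega : ¬ (0:ℕ)+1 = 0),
        if_pos (by omega : (0:ℕ)+1 ≤ m+1), Nat.add_sub_cancel, e0, e1, e2]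
      exact (hL _ _ _).symm
    · rcases Nat.lt_or_ge j (m+1) with hjlt | hjtop
      · -- case i = 0, 1 ≤ j ≤ m
        have e1 : hmerge (m+1) j a 0 = a 0 := by
          simp only [hmerge, Fin.val_zero]
          simp only [hjpos, ↓reduceIte]
          exact congrArg a (Fin.ext (by simp))
        have e2 : Fin.tail (hmerge (m+1) j a) = hmerge m (j-1) (Fin.tail a) := by
          funext t
          simp only [hmerge, Fin.tail, Fin.coe_castSucc, Fin.val_succ]
          split_ifs <;>
            first
              | rfl
              | omega
              | (congr 1 <;> first
                  | exact congrArg a (Fin.ext (by simp))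
                  | (congr 1 <;> exact congrArg a (Fin.ext (by simp))))
        simp only [hface, if_pos rfl, if_neg (by omega : ¬ j = 0),
          if_neg (by omega : ¬ j + 1 = 0), if_pos (by omega : j ≤ m),
          if_pos (by omega : j + 1 ≤ m + 1), Nat.add_sub_cancel, e1, e2]
        rfl
      · -- case i = 0, j = m+1
        have hj' : j = m + 1 := le_antisymm hj hjtop
        subst hj'
        have e1 : Fin.tail a (Fin.last m) = a (Fin.last (m+1)) := by
          simp only [Fin.tail]
          exact congrArg a (Fin.ext (by simp))
        have e2 : Fin.init a 0 = a 0 := by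
          simp only [Fin.init]
          exact congrArg a (Fin.ext (by simp))
        have e3 : Fin.init (Fin.tail a) = Fin.tail (Fin.init a) := by
          funext t
          simp only [Fin.init, Fin.tail]
          exact congrArg a (Fin.ext (by simp))
        simp only [hface, if_pos rfl, if_neg (by omega : ¬ m + 1 = 0),
          if_neg (by omega : ¬ m + 1 ≤ m), if_neg (by omega : ¬ m + 1 + 1 = 0),
          if_neg (by omega : ¬ m + 1 + 1 ≤ m + 1), e1, e2, e3]
        exact (hLR _ _ _).symm
  · -- i ≥ 1
    have hjpos : 1 ≤ j := le_trans hipos hij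
    rcases Nat.lt_or_ge j (m+1) with hjlt | hjtop
    · -- 1 ≤ i ≤ j ≤ m : both middle
      simp only [hface, if_neg (by omega : ¬ i = 0), if_pos (by omega : i ≤ m + 1),
        if_neg (by omega : ¬ j = 0), if_pos (by omega : j ≤ m),
        if_neg (by omega : ¬ j + 1 = 0), if_pos (by omega : j + 1 ≤ m + 1),
        if_neg (by omega : ¬ i = 0), if_pos (by omega : i ≤ m), Nat.add_sub_cancel]
      have := hmerge_hmerge (A := A) m (i-1) (j-1) (by omega) a
      rw [show (j-1) + 1 = j by omega] at this
      rw [this]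
    · -- j = m+1
      have hj' : j = m + 1 := le_antisymm hj hjtop
      subst hj'
      rcases Nat.lt_or_ge i (m+1) with hilt | hitop
      · -- 1 ≤ i ≤ m, j = m+1
        have e1 : hmerge (m+1) (i-1) a (Fin.last m) = a (Fin.last (m+1)) := by
          simp only [hmerge, Fin.val_last]
          rw [if_neg (by omega), if_neg (by omega)]
          exact congrArg a (Fin.ext (by simp))
        have e2 : Fin.init (hmerge (m+1) (i-1) a) = hmerge m (i-1) (Fin.init a) := by
          funext t
          simp only [hmerge, Fin.init, Fin.coe_castSucc, Fin.val_succ]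
          split_ifs <;>
            first
              | rfl
              | omega
              | (congr 1 <;> first
                  | exact congrArg a (Fin.ext (by simp))
                  | (congr 1 <;> exact congrArg a (Fin.ext (by simp))))
        simp only [hface, if_neg (by omega : ¬ i = 0), if_pos (by omega : i ≤ m + 1),
          if_neg (by omega : ¬ m + 1 = 0), if_neg (by omega : ¬ m + 1 ≤ m),
          if_neg (by omega : ¬ m + 1 + 1 = 0), if_neg (by omega : ¬ m + 1 + 1 ≤ m + 1),
          if_pos (by omega : i ≤ m), e1, e2]
      · -- i = j = m+1
        have hi' : i = m + 1 := le_antisymm (hij.trans hj) hitop  -- i ≤ m+1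
        subst hi'
        have e1 : hmerge (m+1) (m+1-1) a (Fin.last m)
            = a (Fin.last m).castSucc * a (Fin.last m).succ := by
          simp only [hmerge, Fin.val_last]
          rw [if_neg (by omega), if_pos (by omega)]
        have e2 : Fin.init (hmerge (m+1) (m+1-1) a) = Fin.init (Fin.init a) := by
          funext t
          simp only [hmerge, Fin.init, Fin.coe_castSucc]
          rw [if_pos (by omega)]
        have e3 : Fin.init a (Fin.last m) = a (Fin.last m).castSucc := by
          simp [Fin.init]
        have e4 : a (Fin.last (m+1)) = a (Fin.last m).succ := by
          exact congrArg a (Fin.ext (by simp))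
        simp only [hface, if_neg (by omega : ¬ m + 1 = 0), if_pos (le_refl (m+1)),
          if_neg (by omega : ¬ m + 1 ≤ m), if_neg (by omega : ¬ m + 1 + 1 = 0),
          if_neg (by omega : ¬ m + 1 + 1 ≤ m + 1), e1, e2, e3, e4]
        exact (hR _ _ _).symm


lemma hface_sum (L R : A → M →+ M) (m j : ℕ) {ι : Type*} (s : Finset ι) (c : ι → ℤ)
    (G : ι → (Fin m → A) → M) (a : Fin (m+1) → A) :
    hface L R m j (fun b => ∑ i ∈ s, c i • G i b) a
      = ∑ i ∈ s, c i • hface L R m j (G i) a := by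
  unfold hface
  split_ifs with h1 h2
  · rw [map_sum]
    simp only [map_zsmul]
  · rfl
  · rw [map_sum]
    simp only [map_zsmul]

lemma sgn_lemma (p q : ℕ) (h : (p + q) % 2 = 1) : (-1 : ℤ)^p = -(-1)^q := by
  rcases Nat.even_or_odd p with hp | hp
  · have hq : Odd q := by
      rw [Nat.even_iff] at hp; rw [Nat.odd_iff]; omega
    rw [hp.neg_one_pow, hq.neg_one_pow, neg_neg]
  · have hq : Even q := by
      rw [Nat.odd_iff] at hp; rw [Nat.even_iff]; omega
    rw [hp.neg_one_pow, hq.neg_one_pow]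

lemma cancel_lemma {N : Type*} [AddCommGroup N] (n : ℕ) (P : ℕ → ℕ → N)
    (h : ∀ i j, i ≤ j → j ≤ n + 1 → P i (j + 1) = P j i) :
    ∑ j ∈ Finset.range (n+3), ∑ i ∈ Finset.range (n+2), ((-1:ℤ)^(i+j)) • P i j = 0 := by
  classical
  have hrw : ∑ j ∈ Finset.range (n+3), ∑ i ∈ Finset.range (n+2), ((-1:ℤ)^(i+j)) • P i j
      = ∑ p ∈ Finset.range (n+3) ×ˢ Finset.range (n+2), ((-1:ℤ)^(p.2+p.1)) • P p.2 p.1 := by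
    rw [Finset.sum_product]
  rw [hrw]
  rw [← Finset.sum_filter_add_sum_filter_not (Finset.range (n+3) ×ˢ Finset.range (n+2))
    (fun p => p.1 ≤ p.2)]
  have key : ∑ p ∈ (Finset.range (n+3) ×ˢ Finset.range (n+2)).filter (fun p => ¬ p.1 ≤ p.2),
        ((-1:ℤ)^(p.2+p.1)) • P p.2 p.1
      = ∑ p ∈ (Finset.range (n+3) ×ˢ Finset.range (n+2)).filter (fun p => p.1 ≤ p.2),
        (-(((-1:ℤ)^(p.2+p.1)) • P p.2 p.1)) := by
    refine Finset.sum_nbij' (fun p => (p.2, p.1 - 1)) (fun p => (p.2 + 1, p.1)) ?_ ?_ ?_ ?_ ?_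
    · intro p hp
      simp only [Finset.mem_filter, Finset.mem_product, Finset.mem_range] at hp ⊢
      omega
    · intro p hp
      simp only [Finset.mem_filter, Finset.mem_product, Finset.mem_range] at hp ⊢
      omega
    · intro p hp
      simp only [Finset.mem_filter, Finset.mem_product, Finset.mem_range] at hp
      ext <;> simp <;> omega
    · intro p hp
      simp only [Finset.mem_filter, Finset.mem_product, Finset.mem_range] at hp
      ext <;> simp <;> omega
    · intro p hp
      simp only [Finset.mem_filter, Finset.mem_product, Finset.mem_range] at hp
      obtain ⟨⟨hp1, hp2⟩, hp3⟩ := hp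
      have hP : P p.2 p.1 = P (p.1 - 1) p.2 := by
        have := h p.2 (p.1 - 1) (by omega) (by omega)
        rw [show p.1 - 1 + 1 = p.1 by omega] at this
        exact this
      rw [hP]
      rw [sgn_lemma (p.2 + p.1) ((p.1 - 1) + p.2) (by omega), neg_smul]
  rw [key, Finset.sum_neg_distrib]
  exact add_neg_cancel _

end HochAux

lemma hoch_eq_sum (k : Type*) [Field k] (lam : k) (A M : Type*) [NonUnitalRing A] [Module k A]
    [AddCommGroup M] [Module k M]
    (l : A →ₗ[k] M →ₗ[k] M) (r : M →ₗ[k] A →ₗ[k] M) (d : A →ₗ[k] A)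
    (m : ℕ) (F : (Fin m → A) → M) (a : Fin (m + 1) → A) :
    hochDOCob k lam A M l r d F a
      = ∑ j ∈ Finset.range (m + 2), ((-1 : ℤ) ^ (m + 1 - j)) •
          hface (fun b => (l (b + lam • d b)).toAddMonoidHom)
            (fun b => (r.flip (b + lam • d b)).toAddMonoidHom) m j F a := by
  rw [Finset.sum_range_succ, Finset.sum_range_succ']
  have e0 : hface (fun b => (l (b + lam • d b)).toAddMonoidHom)
      (fun b => ((r.flip) (b + lam • d b)).toAddMonoidHom) m 0 F a
      = l (a 0 + lam • d (a 0)) (F (Fin.tail a)) := by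
    simp only [hface, if_pos rfl]
    rfl
  have etop : hface (fun b => (l (b + lam • d b)).toAddMonoidHom)
      (fun b => ((r.flip) (b + lam • d b)).toAddMonoidHom) m (m + 1) F a
      = r (F (Fin.init a)) (a (Fin.last m) + lam • d (a (Fin.last m))) := by
    simp only [hface, if_neg (by omega : ¬ m + 1 = 0), if_neg (by omega : ¬ m + 1 ≤ m)]
    rfl
  have emid : ∀ j ∈ Finset.range m, ((-1 : ℤ) ^ (m + 1 - (j + 1))) •
        hface (fun b => (l (b + lam • d b)).toAddMonoidHom)
          (fun b => ((r.flip) (b + lam • d b)).toAddMonoidHom) m (j + 1) F a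
      = ((-1 : ℤ) ^ (m - j)) • F (hmerge m j a) := by
    intro j hj
    simp only [Finset.mem_range] at hj
    simp only [hface, if_neg (by omega : ¬ j + 1 = 0), if_pos (by omega : j + 1 ≤ m),
      Nat.add_sub_cancel, Nat.succ_sub_succ, Nat.sub_zero]
  rw [Finset.sum_congr rfl emid, e0, etop, Nat.sub_zero, Nat.sub_self, pow_zero, one_smul]
  show ((-1 : ℤ) ^ (m + 1)) • l (a 0 + lam • d (a 0)) (F (Fin.tail a))
      + (∑ i : Fin m, ((-1 : ℤ) ^ (m - (i : ℕ))) • F (hmerge m (i : ℕ) a))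
      + r (F (Fin.init a)) (a (Fin.last m) + lam • d (a (Fin.last m))) = _
  rw [Fin.sum_univ_eq_sum_range (fun t => ((-1 : ℤ) ^ (m - t)) • F (hmerge m t a)) m]
  abel

/-- For a differential algebra `(A, d)` of weight `λ` and a differential
bimodule `(M, dM)` over it, the operators `∂ⁿ_DO` satisfy `∂^{n+1}_DO ∘ ∂^n_DO = 0`,
so `(C^•_DO(A,M), ∂^•_DO)` is a cochain complex. -/
theorem stmt3 (k : Type*) [Field k] [CharZero k] (lam : k)
    (A : Type*) [NonUnitalRing A] [Module k A]
    [SMulCommClass k A A] [IsScalarTower k A A]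
    (M : Type*) [AddCommGroup M] [Module k M]
    (l : A →ₗ[k] M →ₗ[k] M) (r : M →ₗ[k] A →ₗ[k] M)
    (hl : ∀ (a b : A) (x : M), l (a * b) x = l a (l b x))
    (hr : ∀ (a b : A) (x : M), r (r x a) b = r x (a * b))
    (hlr : ∀ (a b : A) (x : M), r (l a x) b = l a (r x b))
    (d : A →ₗ[k] A)
    (hd : ∀ u v : A, d (u * v) = d u * v + u * d v + lam • (d u * d v))
    (dM : M →ₗ[k] M)
    (hdl : ∀ (a : A) (x : M), dM (l a x) = l (d a) x + l a (dM x) + lam • l (d a) (dM x))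
    (hdr : ∀ (a : A) (x : M), dM (r x a) = r x (d a) + r (dM x) a + lam • r (dM x) (d a))
    (n : ℕ) (f : MultilinearMap k (fun _ : Fin n => A) M) :
    hochDOCob k lam A M l r d (hochDOCob k lam A M l r d ⇑f) = 0 := by
  have phi : ∀ u v : A, u * v + lam • d (u * v) = (u + lam • d u) * (v + lam • d v) := by
    intro u v
    rw [hd u v]
    simp only [mul_add, add_mul, smul_add, mul_smul_comm, smul_mul_assoc, smul_smul]
    abel
  set Lb : A → M →+ M := fun b => (l (b + lam • d b)).toAddMonoidHom with hLbdef
  set Rb : A → M →+ M := fun b => ((r.flip) (b + lam • d b)).toAddMonoidHom with hRbdef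
  have hLb : ∀ (u v : A) (x : M), Lb (u * v) x = Lb u (Lb v x) := by
    intro u v x
    show l (u * v + lam • d (u * v)) x = l (u + lam • d u) (l (v + lam • d v) x)
    rw [phi, hl]
  have hRb : ∀ (u v : A) (x : M), Rb v (Rb u x) = Rb (u * v) x := by
    intro u v x
    show r (r x (u + lam • d u)) (v + lam • d v) = r x (u * v + lam • d (u * v))
    rw [phi, hr]
  have hLRb : ∀ (u v : A) (x : M), Rb v (Lb u x) = Lb u (Rb v x) := by
    intro u v x
    show r (l (u + lam • d u) x) (v + lam • d v) = l (u + lam • d u) (r x (v + lam • d v))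
    rw [hlr]
  funext a
  have inner : hochDOCob k lam A M l r d ⇑f
      = fun b => ∑ i ∈ Finset.range (n + 2), ((-1 : ℤ) ^ (n + 1 - i)) •
          hface Lb Rb n i (⇑f) b := by
    funext b
    exact hoch_eq_sum k lam A M l r d n (⇑f) b
  rw [hoch_eq_sum k lam A M l r d (n + 1) _ a, inner]
  simp only [hface_sum, Finset.smul_sum, smul_smul]
  have sgn : ∀ j ∈ Finset.range (n + 1 + 2), ∀ i ∈ Finset.range (n + 2),
      ((-1 : ℤ) ^ (n + 1 + 1 - j) * (-1 : ℤ) ^ (n + 1 - i)) = -((-1 : ℤ) ^ (i + j)) := by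
    intro j hj i hi
    simp only [Finset.mem_range] at hj hi
    rw [← pow_add]
    exact sgn_lemma (n + 1 + 1 - j + (n + 1 - i)) (i + j) (by omega)
  have step : ∑ j ∈ Finset.range (n + 1 + 2), ∑ i ∈ Finset.range (n + 2),
        ((-1 : ℤ) ^ (n + 1 + 1 - j) * (-1 : ℤ) ^ (n + 1 - i)) •
          hface Lb Rb (n + 1) j (hface Lb Rb n i ⇑f) a
      = -∑ j ∈ Finset.range (n + 3), ∑ i ∈ Finset.range (n + 2),
          ((-1 : ℤ) ^ (i + j)) • hface Lb Rb (n + 1) j (hface Lb Rb n i ⇑f) a := by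
    rw [← Finset.sum_neg_distrib]
    refine Finset.sum_congr rfl fun j hj => ?_
    rw [← Finset.sum_neg_distrib]
    refine Finset.sum_congr rfl fun i hi => ?_
    rw [sgn j hj i hi, neg_smul]
  rw [step, cancel_lemma n (fun i j => hface Lb Rb (n + 1) j (hface Lb Rb n i ⇑f) a)
    (fun i j h1 h2 => (cosimp Lb Rb hLb hRb hLRb n i j h1 h2 (⇑f) a).symm), neg_zero]
  rfl
end

section
/- Let A be a (not necessarily unital) associative k-algebra and λ ∈ k. The bracket on C^•_DO(A) satisfies the graded Jacobi identity with respect to the arity grading: for f ∈ C^m_DO(A), g ∈ C^n_DO(A) and h ∈ C^p_DO(A), (−1)^{mp}[[f,g],h] + (−1)^{nm}[[g,h],f] + (−1)^{pn}[[h,f],g] = 0. In particular, together with graded antisymmetry, the bracket makes C^•_DO(A) into a graded Lie algebra. -/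
/-- The bracket on `C^•_DO(A)` (see STATEMENT 6). -/
def doBracket (k : Type*) [Field k] (lam : k) (A : Type*) [NonUnitalRing A] [Module k A]
    {n m : ℕ} (f : (Fin n → A) → A) (g : (Fin m → A) → A) :
    (Fin (n + m) → A) → A :=
  fun a =>
    ((-1 : ℤ) ^ (n * m)) •
        (lam • (f (fun i => a ⟨i.val, by have := i.isLt; omega⟩) *
                g (fun j => a ⟨n + j.val, by have := j.isLt; omega⟩)))
      - lam • (g (fun j => a ⟨j.val, by have := j.isLt; omega⟩) *
               f (fun i => a ⟨m + i.val, by have := i.isLt; omega⟩))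

/-- the bracket on `C^•_DO(A)` satisfies the graded Jacobi identity with
respect to the arity grading:
`(−1)^{mp}[[f,g],h] + (−1)^{nm}[[g,h],f] + (−1)^{pn}[[h,f],g] = 0`
for `f ∈ Cᵐ_DO(A)`, `g ∈ Cⁿ_DO(A)`, `h ∈ Cᵖ_DO(A)`. -/
theorem stmt7 (k : Type*) [Field k] [CharZero k] (lam : k)
    (A : Type*) [NonUnitalRing A] [Module k A]
    [SMulCommClass k A A] [IsScalarTower k A A]
    (m n p : ℕ) (hm : 1 ≤ m) (hn : 1 ≤ n) (hp : 1 ≤ p)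
    (f : MultilinearMap k (fun _ : Fin m => A) A)
    (g : MultilinearMap k (fun _ : Fin n => A) A)
    (h : MultilinearMap k (fun _ : Fin p => A) A) :
    ∀ a : Fin (m + n + p) → A,
      ((-1 : ℤ) ^ (m * p)) • doBracket k lam A (doBracket k lam A ⇑f ⇑g) ⇑h a
        + ((-1 : ℤ) ^ (n * m)) • doBracket k lam A (doBracket k lam A ⇑g ⇑h) ⇑f
            (fun i : Fin (n + p + m) => a (Fin.cast (show n + p + m = m + n + p by omega) i))
        + ((-1 : ℤ) ^ (p * n)) • doBracket k lam A (doBracket k lam A ⇑h ⇑f) ⇑g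
            (fun i : Fin (p + m + n) => a (Fin.cast (show p + m + n = m + n + p by omega) i))
        = 0 := by
  intro a
  simp only [doBracket, Fin.cast_mk]
  have ef1 : (f fun i : Fin m => a ⟨p + (n + i.val), by have := i.isLt; omega⟩)
      = (f fun i : Fin m => a ⟨n + p + i.val, by have := i.isLt; omega⟩) := by
    apply congrArg; funext i; apply congrArg
    simp only [Fin.mk.injEq]; omega
  have ef2 : (f fun i : Fin m => a ⟨n + (p + i.val), by have := i.isLt; omega⟩)
      = (f fun i : Fin m => a ⟨n + p + i.val, by have := i.isLt; omega⟩) := by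
    apply congrArg; funext i; apply congrArg
    simp only [Fin.mk.injEq]; omega
  have eg1 : (g fun i : Fin n => a ⟨p + (m + i.val), by have := i.isLt; omega⟩)
      = (g fun i : Fin n => a ⟨p + m + i.val, by have := i.isLt; omega⟩) := by
    apply congrArg; funext i; apply congrArg
    simp only [Fin.mk.injEq]; omega
  have eg2 : (g fun i : Fin n => a ⟨m + (p + i.val), by have := i.isLt; omega⟩)
      = (g fun i : Fin n => a ⟨p + m + i.val, by have := i.isLt; omega⟩) := by
    apply congrArg; funext i; apply congrArg
    simp only [Fin.mk.injEq]; omega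
  have eh1 : (h fun i : Fin p => a ⟨m + (n + i.val), by have := i.isLt; omega⟩)
      = (h fun i : Fin p => a ⟨m + n + i.val, by have := i.isLt; omega⟩) := by
    apply congrArg; funext i; apply congrArg
    simp only [Fin.mk.injEq]; omega
  have eh2 : (h fun i : Fin p => a ⟨n + (m + i.val), by have := i.isLt; omega⟩)
      = (h fun i : Fin p => a ⟨m + n + i.val, by have := i.isLt; omega⟩) := by
    apply congrArg; funext i; apply congrArg
    simp only [Fin.mk.injEq]; omega
  rw [ef1, ef2, eg1, eg2, eh1, eh2]
  have s1 : ((-1 : ℤ)) ^ ((m + n) * p) = (-1) ^ (m * p) * (-1) ^ (n * p) := by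
    rw [add_mul, pow_add]
  have s2 : ((-1 : ℤ)) ^ ((n + p) * m) = (-1) ^ (m * n) * (-1) ^ (m * p) := by
    rw [add_mul, pow_add, Nat.mul_comm n m, Nat.mul_comm p m]
  have s3 : ((-1 : ℤ)) ^ ((p + m) * n) = (-1) ^ (n * p) * (-1) ^ (m * n) := by
    rw [add_mul, pow_add, Nat.mul_comm p n]
  have s4 : ((-1 : ℤ)) ^ (n * m) = (-1) ^ (m * n) := by rw [Nat.mul_comm]
  have s5 : ((-1 : ℤ)) ^ (p * n) = (-1) ^ (n * p) := by rw [Nat.mul_comm]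
  have s6 : ((-1 : ℤ)) ^ (p * m) = (-1) ^ (m * p) := by rw [Nat.mul_comm]
  rw [s1, s2, s3, s4, s5, s6]
  rcases Nat.even_or_odd (m * n) with hmn | hmn <;>
    rcases Nat.even_or_odd (n * p) with hnp | hnp <;>
      rcases Nat.even_or_odd (m * p) with hmp | hmp <;>
        simp only [hmn.neg_one_pow, hnp.neg_one_pow, hmp.neg_one_pow, one_smul, neg_smul,
          one_mul, neg_mul, mul_one, mul_neg, neg_neg, smul_sub, smul_neg, sub_mul, mul_sub,
          smul_mul_assoc, mul_smul_comm, smul_smul, smul_add, mul_assoc] <;>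
        abel
end
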